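/- arXiv:2412.04268 — 3 statements merged into one kernel-verified Lean document; each statement's English description precedes it below -/
import Mathlib

section
/- Let A : Δ_*[0,T] → ℝ^{n×n} and φ, ψ : [0,T] → ℝ^n be continuous, and suppose X, Ȳ : [0,T] → ℝ^n are continuous functions satisfying X(t) = φ(t) + ∫₀^t A(t,s) X(s) ds and Ȳ(t) = ψ(t) + ∫ₜ^T A(s,t)^⊤ Ȳ(s) ds for all t ∈ [0,T]. Then ∫₀^T ⟨ψ(t), X(t)⟩ dt = ∫₀^T ⟨Ȳ(t), φ(t)⟩ dt. -/
open scoped RealInnerProductSpace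

open MeasureTheory Set

/-- If `X` solves the linear forward Volterra equation with forcing `φ` and `Ȳ` solves the
adjoint backward Volterra equation with forcing `ψ`, then
`∫₀ᵀ ⟨ψ(t), X(t)⟩ dt = ∫₀ᵀ ⟨Ȳ(t), φ(t)⟩ dt`. -/
theorem stmt1 (n : ℕ) (T : ℝ) (hT : 0 < T)
    (A : ℝ → ℝ → (EuclideanSpace ℝ (Fin n) →L[ℝ] EuclideanSpace ℝ (Fin n)))
    (hA : ContinuousOn (fun p : ℝ × ℝ => A p.1 p.2)
      {p : ℝ × ℝ | 0 ≤ p.2 ∧ p.2 ≤ p.1 ∧ p.1 ≤ T})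
    (φ ψ X Ybar : ℝ → EuclideanSpace ℝ (Fin n))
    (hφ : Continuous φ) (hψ : Continuous ψ)
    (hX : Continuous X) (hY : Continuous Ybar)
    (hXeq : ∀ t ∈ Set.Icc (0:ℝ) T, X t = φ t + ∫ s in (0:ℝ)..t, A t s (X s))
    (hYeq : ∀ t ∈ Set.Icc (0:ℝ) T, Ybar t = ψ t + ∫ s in t..T, (A s t).adjoint (Ybar s)) :
    ∫ t in (0:ℝ)..T, ⟪ψ t, X t⟫ = ∫ t in (0:ℝ)..T, ⟪Ybar t, φ t⟫ := by
  have hT' : (0:ℝ) ≤ T := hT.le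
  set Δ : Set (ℝ × ℝ) := {p : ℝ × ℝ | 0 ≤ p.2 ∧ p.2 ≤ p.1 ∧ p.1 ≤ T} with hΔdef
  set f : ℝ × ℝ → ℝ := fun p => ⟪Ybar p.1, A p.1 p.2 (X p.2)⟫ with hfdef
  set F : ℝ × ℝ → ℝ := Δ.indicator f with hFdef
  have hΔclosed : IsClosed Δ := by
    have h1 : IsClosed {p : ℝ × ℝ | 0 ≤ p.2} := isClosed_le continuous_const continuous_snd
    have h2 : IsClosed {p : ℝ × ℝ | p.2 ≤ p.1} := isClosed_le continuous_snd continuous_fst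
    have h3 : IsClosed {p : ℝ × ℝ | p.1 ≤ T} := isClosed_le continuous_fst continuous_const
    exact h1.inter (h2.inter h3)
  have hΔmeas : MeasurableSet Δ := hΔclosed.measurableSet
  have hΔcpt : IsCompact Δ := by
    refine IsCompact.of_isClosed_subset
      (isCompact_Icc.prod isCompact_Icc : IsCompact (Set.Icc (0:ℝ) T ×ˢ Set.Icc (0:ℝ) T))
      hΔclosed ?_
    rintro ⟨t, s⟩ ⟨h1, h2, h3⟩
    exact ⟨⟨h1.trans h2, h3⟩, ⟨h1, h2.trans h3⟩⟩
  have hfc : ContinuousOn f Δ :=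
    ContinuousOn.inner (hY.comp continuous_fst).continuousOn
      (hA.clm_apply (hX.comp continuous_snd).continuousOn)
  have hFint : Integrable F := by
    rw [hFdef, integrable_indicator_iff hΔmeas]
    exact hfc.integrableOn_compact hΔcpt
  have hFprod : Integrable F ((volume : Measure ℝ).prod volume) := by
    rwa [← Measure.volume_eq_prod]
  -- pointwise identities
  have key1 : ∀ t ∈ Set.Icc (0:ℝ) T, ⟪ψ t, X t⟫ = ⟪Ybar t, X t⟫ - ∫ s, F (s, t) := by
    intro t ht
    have hg : ContinuousOn (fun s => (A s t).adjoint (Ybar s)) (Set.Icc t T) := by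
      have h1 : ContinuousOn (fun s => A s t) (Set.Icc t T) :=
        hA.comp (continuous_id.prodMk continuous_const).continuousOn
          (fun s hs => ⟨ht.1, hs.1, hs.2⟩)
      exact ((ContinuousLinearMap.adjoint.continuous.comp_continuousOn h1).clm_apply
        hY.continuousOn)
    have hgint : IntegrableOn (fun s => (A s t).adjoint (Ybar s)) (Set.Ioc t T) :=
      (hg.integrableOn_Icc).mono_set Set.Ioc_subset_Icc_self
    have hind : (fun s => F (s, t)) = (Set.Icc t T).indicator (fun s => f (s, t)) := by
      funext s
      by_cases h : s ∈ Set.Icc t T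
      · have hm : ((s, t) : ℝ × ℝ) ∈ Δ := ⟨ht.1, h.1, h.2⟩
        rw [Set.indicator_of_mem h, hFdef, Set.indicator_of_mem hm]
      · rw [Set.indicator_of_notMem h, hFdef, Set.indicator_of_notMem]
        intro hc; exact h ⟨hc.2.1, hc.2.2⟩
    have hIF : ∫ s, F (s, t) = ∫ s in Set.Ioc t T, f (s, t) := by
      rw [hind, integral_indicator measurableSet_Icc, integral_Icc_eq_integral_Ioc]
    have hψt : ψ t = Ybar t - ∫ s in t..T, (A s t).adjoint (Ybar s) := by
      rw [hYeq t ht]; abel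
    rw [hψt, inner_sub_left, hIF]
    congr 1
    rw [intervalIntegral.integral_of_le ht.2, real_inner_comm, ← integral_inner hgint]
    refine setIntegral_congr_fun measurableSet_Ioc (fun s _ => ?_)
    rw [real_inner_comm, ContinuousLinearMap.adjoint_inner_left]
  have key2 : ∀ t ∈ Set.Icc (0:ℝ) T, ⟪Ybar t, φ t⟫ = ⟪Ybar t, X t⟫ - ∫ s, F (t, s) := by
    intro t ht
    have hg : ContinuousOn (fun s => A t s (X s)) (Set.Icc 0 t) := by
      have h1 : ContinuousOn (fun s => A t s) (Set.Icc 0 t) :=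
        hA.comp (continuous_const.prodMk continuous_id).continuousOn
          (fun s hs => ⟨hs.1, hs.2, ht.2⟩)
      exact h1.clm_apply hX.continuousOn
    have hgint : IntegrableOn (fun s => A t s (X s)) (Set.Ioc 0 t) :=
      (hg.integrableOn_Icc).mono_set Set.Ioc_subset_Icc_self
    have hind : (fun s => F (t, s)) = (Set.Icc 0 t).indicator (fun s => f (t, s)) := by
      funext s
      by_cases h : s ∈ Set.Icc 0 t
      · have hm : ((t, s) : ℝ × ℝ) ∈ Δ := ⟨h.1, h.2, ht.2⟩
        rw [Set.indicator_of_mem h, hFdef, Set.indicator_of_mem hm]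
      · rw [Set.indicator_of_notMem h, hFdef, Set.indicator_of_notMem]
        intro hc; exact h ⟨hc.1, hc.2.1⟩
    have hIF : ∫ s, F (t, s) = ∫ s in Set.Ioc 0 t, f (t, s) := by
      rw [hind, integral_indicator measurableSet_Icc, integral_Icc_eq_integral_Ioc]
    have hφt : φ t = X t - ∫ s in (0:ℝ)..t, A t s (X s) := by
      rw [hXeq t ht]; abel
    rw [hφt, inner_sub_right, hIF]
    congr 1
    rw [intervalIntegral.integral_of_le ht.1, ← integral_inner hgint]
  -- the two iterated integrals agree by Fubini
  have hG1int : Integrable (fun t => ∫ s, F (s, t)) := hFprod.integral_prod_right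
  have hG2int : Integrable (fun t => ∫ s, F (t, s)) := hFprod.integral_prod_left
  have hswap : ∫ t in Set.Ioc 0 T, (∫ s, F (s, t)) = ∫ t in Set.Ioc 0 T, (∫ s, F (t, s)) := by
    have hz1 : ∀ t, t ∉ Set.Icc (0:ℝ) T → (∫ s, F (s, t)) = 0 := by
      intro t ht
      have : (fun s => F (s, t)) = fun _ => (0:ℝ) := by
        funext s
        refine Set.indicator_of_notMem (fun hc => ht ⟨hc.1, hc.2.1.trans hc.2.2⟩) _
      rw [this, integral_zero]
    have hz2 : ∀ t, t ∉ Set.Icc (0:ℝ) T → (∫ s, F (t, s)) = 0 := by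
      intro t ht
      have : (fun s => F (t, s)) = fun _ => (0:ℝ) := by
        funext s
        refine Set.indicator_of_notMem (fun hc => ht ⟨hc.1.trans hc.2.1, hc.2.2⟩) _
      rw [this, integral_zero]
    calc ∫ t in Set.Ioc 0 T, (∫ s, F (s, t))
        = ∫ t in Set.Icc 0 T, (∫ s, F (s, t)) := (integral_Icc_eq_integral_Ioc).symm
      _ = ∫ t, (∫ s, F (s, t)) := setIntegral_eq_integral_of_forall_compl_eq_zero hz1
      _ = ∫ s, (∫ t, F (s, t)) := by
            exact (MeasureTheory.integral_integral_swap (f := fun s t => F (s, t)) hFprod).symm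
      _ = ∫ t, (∫ s, F (t, s)) := rfl
      _ = ∫ t in Set.Icc 0 T, (∫ s, F (t, s)) :=
            (setIntegral_eq_integral_of_forall_compl_eq_zero hz2).symm
      _ = ∫ t in Set.Ioc 0 T, (∫ s, F (t, s)) := integral_Icc_eq_integral_Ioc
  -- put everything together
  have hYXint : IntegrableOn (fun t => ⟪Ybar t, X t⟫) (Set.Ioc 0 T) :=
    ((hY.inner hX).continuousOn.integrableOn_Icc).mono_set Set.Ioc_subset_Icc_self
  rw [intervalIntegral.integral_of_le hT', intervalIntegral.integral_of_le hT']
  calc ∫ t in Set.Ioc 0 T, ⟪ψ t, X t⟫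
      = ∫ t in Set.Ioc 0 T, (⟪Ybar t, X t⟫ - ∫ s, F (s, t)) := by
        refine setIntegral_congr_fun measurableSet_Ioc (fun t ht => ?_)
        exact key1 t ⟨ht.1.le, ht.2⟩
    _ = (∫ t in Set.Ioc 0 T, ⟪Ybar t, X t⟫) - ∫ t in Set.Ioc 0 T, (∫ s, F (s, t)) :=
        integral_sub hYXint hG1int.integrableOn
    _ = (∫ t in Set.Ioc 0 T, ⟪Ybar t, X t⟫) - ∫ t in Set.Ioc 0 T, (∫ s, F (t, s)) := by
        rw [hswap]
    _ = ∫ t in Set.Ioc 0 T, (⟪Ybar t, X t⟫ - ∫ s, F (t, s)) :=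
        (integral_sub hYXint hG2int.integrableOn).symm
    _ = ∫ t in Set.Ioc 0 T, ⟪Ybar t, φ t⟫ := by
        refine setIntegral_congr_fun measurableSet_Ioc (fun t ht => ?_)
        exact (key2 t ⟨ht.1.le, ht.2⟩).symm
end

section
/- Fix T > 0, n, m ∈ ℕ, δ > 0, L > 0, and continuous maps A, B (matrix-valued, defined on the triangle 0 ≤ s ≤ t ≤ T), R : [0,T] → ℝ^{m×m} with R(t) symmetric and R(t) ⪰ δ·I, and functions Qₓ : [0,T] × ℝ^n → ℝ^n, Mₓ : ℝ^n → ℝ^n satisfying ⟨Qₓ(t,x₁) − Qₓ(t,x₂), x₁ − x₂⟩ ≥ δ|x₁ − x₂|² for all t, x₁, x₂. Fix t ∈ [0,T], and let x₁, x₂, y₁, y₂ : [0,T] → ℝ^n be continuous. Set x̂ = x₁(t) − x₂(t), ŷ(s) = y₁(s) − y₂(s), Ĝ = Mₓ(x₁(T)) − Mₓ(x₂(T)), v = B(T,t)^⊤ Ĝ + ∫ₜ^T B(r,t)^⊤ ŷ(r) dr. Then ∫ₜ^T ⟨ŷ(s), A(s,t)x̂ − ½B(s,t)R(t)⁻¹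 v⟩ ds − ⟨Qₓ(t,x₁(t)) − Qₓ(t,x₂(t)) + A(T,t)^⊤ Ĝ + ∫ₜ^T A(s,t)^⊤ ŷ(s) ds, x̂⟩ + ⟨Ĝ, A(T,t)x̂ − ½B(T,t)R(t)⁻¹ v⟩ = −⟨Qₓ(t,x₁(t)) − Qₓ(t,x₂(t)), x̂⟩ − ½⟨R(t)⁻¹ v, v⟩ ≤ −δ|x̂|². -/
open scoped RealInnerProductSpace

set_option maxHeartbeats 1000000

/-- Verification of the non-local monotonicity condition for the Hamiltonian system of a
linear-convex optimal control problem for Volterra integral equations. -/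
theorem stmt8 (n m : ℕ) (T : ℝ) (hT : 0 < T) (δ L : ℝ) (hδ : 0 < δ) (hL : 0 < L)
    (A : ℝ → ℝ → (EuclideanSpace ℝ (Fin n) →L[ℝ] EuclideanSpace ℝ (Fin n)))
    (B : ℝ → ℝ → (EuclideanSpace ℝ (Fin m) →L[ℝ] EuclideanSpace ℝ (Fin n)))
    (hA : ContinuousOn (fun p : ℝ × ℝ => A p.1 p.2)
      {p : ℝ × ℝ | 0 ≤ p.2 ∧ p.2 ≤ p.1 ∧ p.1 ≤ T})
    (hB : ContinuousOn (fun p : ℝ × ℝ => B p.1 p.2)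
      {p : ℝ × ℝ | 0 ≤ p.2 ∧ p.2 ≤ p.1 ∧ p.1 ≤ T})
    (R Rinv : ℝ → (EuclideanSpace ℝ (Fin m) →L[ℝ] EuclideanSpace ℝ (Fin m)))
    (hR : Continuous R)
    (hRsym : ∀ t, IsSelfAdjoint (R t))
    (hRδ : ∀ t (v : EuclideanSpace ℝ (Fin m)), δ * ‖v‖ ^ 2 ≤ ⟪R t v, v⟫)
    (hRinv : ∀ t, (R t).comp (Rinv t) = ContinuousLinearMap.id ℝ _ ∧
      (Rinv t).comp (R t) = ContinuousLinearMap.id ℝ _)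
    (Qx : ℝ → EuclideanSpace ℝ (Fin n) → EuclideanSpace ℝ (Fin n))
    (Mx : EuclideanSpace ℝ (Fin n) → EuclideanSpace ℝ (Fin n))
    (hQx : ∀ t (z₁ z₂ : EuclideanSpace ℝ (Fin n)),
      δ * ‖z₁ - z₂‖ ^ 2 ≤ ⟪Qx t z₁ - Qx t z₂, z₁ - z₂⟫)
    (t : ℝ) (ht : t ∈ Set.Icc (0:ℝ) T)
    (x₁ x₂ y₁ y₂ : ℝ → EuclideanSpace ℝ (Fin n))
    (hx₁ : Continuous x₁) (hx₂ : Continuous x₂)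
    (hy₁ : Continuous y₁) (hy₂ : Continuous y₂)
    (xh : EuclideanSpace ℝ (Fin n)) (hxh : xh = x₁ t - x₂ t)
    (yh : ℝ → EuclideanSpace ℝ (Fin n)) (hyh : ∀ s, yh s = y₁ s - y₂ s)
    (Gh : EuclideanSpace ℝ (Fin n)) (hGh : Gh = Mx (x₁ T) - Mx (x₂ T))
    (v : EuclideanSpace ℝ (Fin m))
    (hv : v = (B T t).adjoint Gh + ∫ r in t..T, (B r t).adjoint (yh r)) :
    ((∫ s in t..T, ⟪yh s, A s t xh - (1/2 : ℝ) • (B s t) (Rinv t v)⟫)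
        - ⟪Qx t (x₁ t) - Qx t (x₂ t) + (A T t).adjoint Gh
            + ∫ s in t..T, (A s t).adjoint (yh s), xh⟫
        + ⟪Gh, A T t xh - (1/2 : ℝ) • (B T t) (Rinv t v)⟫
      = -⟪Qx t (x₁ t) - Qx t (x₂ t), xh⟫ - (1/2 : ℝ) * ⟪Rinv t v, v⟫)
    ∧ (∫ s in t..T, ⟪yh s, A s t xh - (1/2 : ℝ) • (B s t) (Rinv t v)⟫)
        - ⟪Qx t (x₁ t) - Qx t (x₂ t) + (A T t).adjoint Gh
            + ∫ s in t..T, (A s t).adjoint (yh s), xh⟫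
        + ⟪Gh, A T t xh - (1/2 : ℝ) • (B T t) (Rinv t v)⟫
      ≤ -δ * ‖xh‖ ^ 2 := by

  have htT : t ≤ T := ht.2
  have hyc : Continuous yh := by
    have h : yh = fun s => y₁ s - y₂ s := funext hyh
    rw [h]; exact hy₁.sub hy₂
  have hyhc : ContinuousOn yh (Set.Icc t T) := hyc.continuousOn
  have hmapc : Continuous (fun s : ℝ => ((s, t) : ℝ × ℝ)) := by continuity
  have hmap : ∀ s ∈ Set.Icc t T,
      ((s, t) : ℝ × ℝ) ∈ {p : ℝ × ℝ | 0 ≤ p.2 ∧ p.2 ≤ p.1 ∧ p.1 ≤ T} :=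
    fun s hs => ⟨ht.1, hs.1, hs.2⟩
  have hAc : ContinuousOn (fun s => A s t) (Set.Icc t T) :=
    hA.comp hmapc.continuousOn hmap
  have hBc : ContinuousOn (fun s => B s t) (Set.Icc t T) :=
    hB.comp hmapc.continuousOn hmap
  set w : EuclideanSpace ℝ (Fin m) := Rinv t v with hw
  -- integrability
  have hintA : IntervalIntegrable (fun s => (A s t).adjoint (yh s))
      MeasureTheory.volume t T := by
    apply ContinuousOn.intervalIntegrable
    rw [Set.uIcc_of_le htT]
    exact ((ContinuousLinearMap.adjoint :
      (EuclideanSpace ℝ (Fin n) →L[ℝ] EuclideanSpace ℝ (Fin n)) ≃ₗᵢ⋆[ℝ] _).continuous.comp_continuousOn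
        hAc).clm_apply hyhc
  have hintB : IntervalIntegrable (fun s => (B s t).adjoint (yh s))
      MeasureTheory.volume t T := by
    apply ContinuousOn.intervalIntegrable
    rw [Set.uIcc_of_le htT]
    exact ((ContinuousLinearMap.adjoint :
      (EuclideanSpace ℝ (Fin m) →L[ℝ] EuclideanSpace ℝ (Fin n)) ≃ₗᵢ⋆[ℝ] _).continuous.comp_continuousOn
        hBc).clm_apply hyhc
  have hintE1 : IntervalIntegrable (fun s => ⟪yh s, A s t xh⟫)
      MeasureTheory.volume t T := by
    apply ContinuousOn.intervalIntegrable
    rw [Set.uIcc_of_le htT]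
    exact hyhc.inner (hAc.clm_apply continuousOn_const)
  have hintE2 : IntervalIntegrable (fun s => ⟪yh s, B s t w⟫)
      MeasureTheory.volume t T := by
    apply ContinuousOn.intervalIntegrable
    rw [Set.uIcc_of_le htT]
    exact hyhc.inner (hBc.clm_apply continuousOn_const)
  set E1 : ℝ := ∫ s in t..T, ⟪yh s, A s t xh⟫ with hE1
  set E2 : ℝ := ∫ s in t..T, ⟪yh s, B s t w⟫ with hE2
  -- splitting the main integral
  have hsplit : (∫ s in t..T, ⟪yh s, A s t xh - (1/2 : ℝ) • (B s t) w⟫)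
      = E1 - (1/2 : ℝ) * E2 := by
    have : (fun s => ⟪yh s, A s t xh - (1/2 : ℝ) • (B s t) w⟫)
        = fun s => ⟪yh s, A s t xh⟫ - (1/2 : ℝ) * ⟪yh s, B s t w⟫ := by
      funext s
      rw [inner_sub_right, real_inner_smul_right]
    rw [this, intervalIntegral.integral_sub hintE1 (hintE2.const_mul _),
      intervalIntegral.integral_const_mul]
  -- moving adjoint integrals
  have hadjA : ⟪(∫ s in t..T, (A s t).adjoint (yh s)), xh⟫ = E1 := by
    have h := (innerSL ℝ xh).intervalIntegral_comp_comm hintA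
    simp only [innerSL_apply_apply] at h
    rw [real_inner_comm, ← h, hE1]
    refine intervalIntegral.integral_congr fun s _ => ?_
    rw [real_inner_comm, ContinuousLinearMap.adjoint_inner_left]
  have hadjB : E2 = ⟪v, w⟫ - ⟪Gh, (B T t) w⟫ := by
    have h := (innerSL ℝ w).intervalIntegral_comp_comm hintB
    simp only [innerSL_apply_apply] at h
    have hint : (∫ s in t..T, (B s t).adjoint (yh s)) = v - (B T t).adjoint Gh := by
      rw [hv]; abel
    have h2 : E2 = ⟪w, ∫ s in t..T, (B s t).adjoint (yh s)⟫ := by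
      rw [hE2, ← h]
      refine intervalIntegral.integral_congr fun s _ => ?_
      rw [ContinuousLinearMap.adjoint_inner_right]
      exact real_inner_comm _ _
    rw [h2, hint, inner_sub_right, ContinuousLinearMap.adjoint_inner_right,
      real_inner_comm w v, real_inner_comm ((B T t) w) Gh]
  -- the identity
  have hwv : ⟪Rinv t v, v⟫ = ⟪v, w⟫ := real_inner_comm _ _
  have key : (∫ s in t..T, ⟪yh s, A s t xh - (1/2 : ℝ) • (B s t) (Rinv t v)⟫)
        - ⟪Qx t (x₁ t) - Qx t (x₂ t) + (A T t).adjoint Gh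
            + ∫ s in t..T, (A s t).adjoint (yh s), xh⟫
        + ⟪Gh, A T t xh - (1/2 : ℝ) • (B T t) (Rinv t v)⟫
      = -⟪Qx t (x₁ t) - Qx t (x₂ t), xh⟫ - (1/2 : ℝ) * ⟪Rinv t v, v⟫ := by
    rw [← hw, hsplit, inner_add_left, inner_add_left, hadjA,
      inner_sub_right, real_inner_smul_right,
      ContinuousLinearMap.adjoint_inner_left, hwv]
    have := hadjB
    linarith [hadjB]
  refine ⟨key, ?_⟩
  rw [key]
  -- the inequality
  have hQ : δ * ‖xh‖ ^ 2 ≤ ⟪Qx t (x₁ t) - Qx t (x₂ t), xh⟫ := by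
    rw [hxh]; exact hQx t (x₁ t) (x₂ t)
  have hRw : (0 : ℝ) ≤ ⟪Rinv t v, v⟫ := by
    have hv' : v = R t w := by
      rw [hw]
      have := congrArg (fun L => L v) (hRinv t).1
      simpa using this.symm
    have h1 : ⟪Rinv t v, v⟫ = ⟪R t w, w⟫ := by
      rw [← hw, hv', real_inner_comm]
    rw [h1]
    have h2 := hRδ t w
    nlinarith [sq_nonneg ‖w‖]
  nlinarith
end

section
/- Let X : Δ_*[0,T] → ℝ^n and Y : Δ^*[0,T] → ℝ^n be continuous, with s ↦ X(t,s) C¹ on [0,t] and s ↦ Y(t,s) C¹ on [t,T] for each t, and let G : ℝ^n → ℝ^n be continuous. Suppose t ↦ X(s,t) is C¹ for each fixed s with ∂X(s,t)/∂t = f(s,t) for a continuous f on Δ_*. Define Φ(t) = ∫ₜ^T ⟨Y(s,s), X(s,t)⟩ ds + ⟨G(X(T,T)), X(T,t)⟩. Then Φ is differentiable on [0,T] with Φ'(t) = −⟨Y(t,t), X(t,t)⟩ + ∫ₜ^T ⟨Y(s,s), f(s,t)⟩ ds + ⟨G(X(T,T)), f(T,t)⟩. -/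
/-!
For `t ≤ s`, the fundamental theorem of calculus gives `P(s,t) = P(s,s) - ∫ₜˢ g(s,u) du`
with `P(s,t) = ⟨Y(s,s), X(s,t)⟩` and `g(s,u) = ⟨Y(s,s), f(s,u)⟩`. Swapping the order of
integration over the triangle `t ≤ u ≤ s ≤ T` turns `∫ₜᵀ P(s,t) ds` into
`∫ₜᵀ (P(s,s) - K(s)) ds` with `K(u) = ∫ᵤᵀ g(s,u) ds` continuous, so the fundamental theorem
of calculus once more gives the derivative `-P(t,t) + K(t)`. The boundary term
`⟨G(X(T,T)), X(T,t)⟩` is linear in `X(T,t)`.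
-/

open scoped RealInnerProductSpace
open Set MeasureTheory intervalIntegral Function

variable {E : Type*} [NormedAddCommGroup E] [NormedSpace ℝ E]

def lowerTriangle (a b : ℝ) : Set (ℝ × ℝ) := {p | a ≤ p.2 ∧ p.2 ≤ p.1 ∧ p.1 ≤ b}

def projLowerTriangle (a b : ℝ) (p : ℝ × ℝ) : ℝ × ℝ :=
  (max a (min p.1 b), max a (min p.2 (min p.1 b)))

lemma continuous_projLowerTriangle (a b : ℝ) : Continuous (projLowerTriangle a b) := by
  unfold projLowerTriangle; fun_prop

lemma lowerTriangle_subset_Icc_prod (a b : ℝ) : lowerTriangle a b ⊆ Icc a b ×ˢ Icc a b :=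
  fun _ ⟨h₁, h₂, h₃⟩ => ⟨⟨h₁.trans h₂, h₃⟩, ⟨h₁, h₂.trans h₃⟩⟩

lemma projLowerTriangle_mem {a b : ℝ} (hab : a ≤ b) (p : ℝ × ℝ) :
    projLowerTriangle a b p ∈ lowerTriangle a b :=
  ⟨le_max_left _ _, max_le_max le_rfl (min_le_right _ _), max_le hab (min_le_right _ _)⟩

lemma projLowerTriangle_of_mem {a b : ℝ} {p : ℝ × ℝ} (hp : p ∈ lowerTriangle a b) :
    projLowerTriangle a b p = p := by
  obtain ⟨h₁, h₂, h₃⟩ := hp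
  simp [projLowerTriangle, min_eq_left h₃, min_eq_left h₂, max_eq_right h₁,
    max_eq_right (h₁.trans h₂)]

namespace intervalIntegral

theorem integral_indicator_Ici {f : ℝ → E} {a₁ a₂ a₃ : ℝ} (h : a₂ ∈ Ioc a₁ a₃) :
    ∫ x in a₁..a₃, {x | a₂ ≤ x}.indicator f x = ∫ x in a₂..a₃, f x := by
  have : Ioc a₁ a₃ ∩ {x | a₂ ≤ x} = Icc a₂ a₃ := by
    ext x
    exact ⟨fun ⟨⟨_, hx⟩, hx'⟩ => ⟨hx', hx⟩, fun ⟨hx', hx⟩ => ⟨⟨h.1.trans_le hx', hx⟩, hx'⟩⟩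
  rw [integral_of_le (h.1.le.trans h.2), integral_of_le h.2,
    setIntegral_indicator (t := {x | a₂ ≤ x}) measurableSet_Ici, this,
    integral_Icc_eq_integral_Ioc]

theorem integral_integral_lowerTriangle_swap {F : ℝ → ℝ → E} {a b : ℝ} (hab : a ≤ b)
    (hF : IntegrableOn (uncurry F) (lowerTriangle a b)) :
    ∫ s in a..b, ∫ u in a..s, F s u = ∫ u in a..b, ∫ s in u..b, F s u := by
  set H : ℝ → ℝ → E := fun s u => {p : ℝ × ℝ | p.2 ≤ p.1}.indicator (uncurry F) (s, u)
  have hH : IntegrableOn (uncurry H) (uIoc a b ×ˢ uIoc a b) := by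
    rw [uIoc_of_le hab]
    refine (integrableOn_indicator_iff (measurableSet_le measurable_snd measurable_fst)).2
      (hF.mono_set ?_)
    rintro ⟨s, u⟩ ⟨hsu, ⟨-, hs⟩, ⟨hu, -⟩⟩
    exact ⟨hu.le, hsu, hs⟩
  calc ∫ s in a..b, ∫ u in a..s, F s u = ∫ s in a..b, ∫ u in a..b, H s u :=
        integral_congr fun s hs => (integral_indicator (by rwa [uIcc_of_le hab] at hs)).symm
    _ = ∫ u in a..b, ∫ s in a..b, H s u := intervalIntegral_intervalIntegral_swap hH
    _ = ∫ u in a..b, ∫ s in u..b, F s u :=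
        integral_congr_ae (Filter.Eventually.of_forall fun u hu =>
          integral_indicator_Ici (by rwa [uIoc_of_le hab] at hu))

end intervalIntegral

theorem integral_eq_sub_of_hasDerivWithinAt_Icc [CompleteSpace E] {φ φ' : ℝ → E} {a b : ℝ}
    (hab : a ≤ b)
    (hφ : ∀ x ∈ Icc a b, HasDerivWithinAt φ (φ' x) (Icc a b) x)
    (hφ' : IntervalIntegrable φ' volume a b) :
    ∫ x in a..b, φ' x = φ b - φ a :=
  integral_eq_sub_of_hasDerivAt_of_le hab (fun x hx => (hφ x hx).continuousWithinAt)
    (fun x hx => (hφ x (Ioo_subset_Icc_self hx)).hasDerivAt (Icc_mem_nhds hx.1 hx.2)) hφ'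

theorem ContinuousOn.hasDerivWithinAt_integral_left [CompleteSpace E] {φ : ℝ → E} {a b t : ℝ}
    (hφ : ContinuousOn φ (Icc a b)) (ht : t ∈ Icc a b) :
    HasDerivWithinAt (fun u => ∫ x in u..b, φ x) (-φ t) (Icc a b) t := by
  have hab : a ≤ b := ht.1.trans ht.2
  set φ' : ℝ → E := φ ∘ (fun x => (projIcc a b hab x : ℝ))
  have hφ' : Continuous φ' :=
    hφ.comp_continuous (continuous_subtype_val.comp continuous_projIcc) fun x => Subtype.mem _
  have hφ'_eq : EqOn φ' φ (Icc a b) := fun x hx => by simp [φ', projIcc_of_mem hab hx]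
  have hderiv : HasDerivAt (fun u => ∫ x in u..b, φ' x) (-φ' t) t :=
    integral_hasDerivAt_left (hφ'.intervalIntegrable _ _) (hφ'.stronglyMeasurableAtFilter _ _)
      hφ'.continuousAt
  have hint_eq : ∀ u ∈ Icc a b, ∫ x in u..b, φ x = ∫ x in u..b, φ' x := fun u hu =>
    integral_congr fun x hx => (hφ'_eq (uIcc_subset_Icc hu (right_mem_Icc.2 hab) hx)).symm
  rw [← hφ'_eq ht]
  exact hderiv.hasDerivWithinAt.congr hint_eq (hint_eq t ht)

theorem hasDerivWithinAt_integral_lowerTriangle [CompleteSpace E] {P g : ℝ → ℝ → E} {a b t : ℝ}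
    (hg : ContinuousOn (uncurry g) (lowerTriangle a b))
    (hPdiag : ContinuousOn (fun s => P s s) (Icc a b))
    (hP : ∀ s u, a ≤ u → u ≤ s → s ≤ b → HasDerivWithinAt (P s) (g s u) (Icc a s) u)
    (ht : t ∈ Icc a b) :
    HasDerivWithinAt (fun u => ∫ s in u..b, P s u) (-P t t + ∫ s in t..b, g s t) (Icc a b) t := by
  have hab : a ≤ b := ht.1.trans ht.2
  -- a continuous extension of `g` to the plane makes all parametric integrals below continuous
  set g' : ℝ → ℝ → E := curry (uncurry g ∘ projLowerTriangle a b)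
  have hg' : Continuous (uncurry g') :=
    hg.comp_continuous (continuous_projLowerTriangle a b) (projLowerTriangle_mem hab)
  have hg'_eq : ∀ s u, (s, u) ∈ lowerTriangle a b → g' s u = g s u := fun s u h => by
    simp [g', projLowerTriangle_of_mem h]
  set K : ℝ → E := fun u => ∫ s in u..b, g' s u
  have hK : Continuous K :=
    ((continuous_parametric_intervalIntegral_of_continuous (f := fun u s => g' s u) (a₀ := b)
      (hg'.comp continuous_swap) continuous_id).neg).congr fun u => (integral_symm b u).symm
  have hP_eq : ∀ u ∈ Icc a b, ∀ s ∈ Icc u b, P s u = P s s - ∫ v in u..s, g' s v := by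
    intro u hu s hs
    have hderiv : ∀ v ∈ Icc u s, HasDerivWithinAt (P s) (g' s v) (Icc u s) v := fun v hv => by
      have hv' : (s, v) ∈ lowerTriangle a b := ⟨hu.1.trans hv.1, hv.2, hs.2⟩
      rw [hg'_eq s v hv']
      exact (hP s v hv'.1 hv.2 hs.2).mono (Icc_subset_Icc hu.1 le_rfl)
    rw [integral_eq_sub_of_hasDerivWithinAt_Icc hs.1 hderiv
      ((hg'.uncurry_left s).intervalIntegrable _ _), sub_sub_cancel]
  have hintegral_eq : ∀ u ∈ Icc a b, ∫ s in u..b, P s u = ∫ s in u..b, (P s s - K s) := by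
    intro u hu
    have hPdiag_int : IntervalIntegrable (fun s => P s s) volume u b :=
      (hPdiag.mono (Icc_subset_Icc hu.1 le_rfl)).intervalIntegrable_of_Icc hu.2
    have hg'_int : IntegrableOn (uncurry g') (lowerTriangle u b) :=
      (hg'.continuousOn.integrableOn_compact (isCompact_Icc.prod isCompact_Icc)).mono_set
        (lowerTriangle_subset_Icc_prod u b)
    calc ∫ s in u..b, P s u = ∫ s in u..b, (P s s - ∫ v in u..s, g' s v) :=
          integral_congr fun s hs => hP_eq u hu s (by rwa [uIcc_of_le hu.2] at hs)
      _ = (∫ s in u..b, P s s) - ∫ s in u..b, ∫ v in u..s, g' s v :=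
          integral_sub hPdiag_int
            ((continuous_parametric_intervalIntegral_of_continuous hg'
              continuous_id).intervalIntegrable _ _)
      _ = (∫ s in u..b, P s s) - ∫ s in u..b, K s := by
          rw [integral_integral_lowerTriangle_swap hu.2 hg'_int]
      _ = ∫ s in u..b, (P s s - K s) := (integral_sub hPdiag_int (hK.intervalIntegrable _ _)).symm
  have hK_eq : K t = ∫ s in t..b, g s t := integral_congr fun s hs => by
    rw [uIcc_of_le ht.2] at hs
    exact hg'_eq s t ⟨ht.1, hs.1, hs.2⟩
  rw [← hK_eq, ← sub_eq_neg_add, ← neg_sub]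
  exact ((hPdiag.sub hK.continuousOn).hasDerivWithinAt_integral_left ht).congr hintegral_eq
    (hintegral_eq t ht)

theorem stmt15_general (n : ℕ) (T : ℝ)
    (X Y f : ℝ → ℝ → EuclideanSpace ℝ (Fin n))
    (G : EuclideanSpace ℝ (Fin n) → EuclideanSpace ℝ (Fin n))
    (hXcont : ContinuousOn (fun p : ℝ × ℝ => X p.1 p.2)
      {p : ℝ × ℝ | 0 ≤ p.2 ∧ p.2 ≤ p.1 ∧ p.1 ≤ T})
    (hYcont : ContinuousOn (fun p : ℝ × ℝ => Y p.1 p.2)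
      {p : ℝ × ℝ | 0 ≤ p.1 ∧ p.1 ≤ p.2 ∧ p.2 ≤ T})
    (hfcont : ContinuousOn (fun p : ℝ × ℝ => f p.1 p.2)
      {p : ℝ × ℝ | 0 ≤ p.2 ∧ p.2 ≤ p.1 ∧ p.1 ≤ T})
    (hXder : ∀ s t : ℝ, 0 ≤ t → t ≤ s → s ≤ T →
      HasDerivWithinAt (fun u => X s u) (f s t) (Set.Icc 0 s) t)
    (Φ : ℝ → ℝ)
    (hΦ : ∀ t, Φ t = (∫ s in t..T, ⟪Y s s, X s t⟫) + ⟪G (X T T), X T t⟫) :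
    ∀ t ∈ Set.Icc (0:ℝ) T,
      HasDerivWithinAt Φ
        (-⟪Y t t, X t t⟫ + (∫ s in t..T, ⟪Y s s, f s t⟫) + ⟪G (X T T), f T t⟫)
        (Set.Icc 0 T) t := by
  intro t ht
  have hYdiag : ContinuousOn (fun s => Y s s) (Icc 0 T) :=
    hYcont.comp (continuous_id.prodMk continuous_id).continuousOn fun s hs => ⟨hs.1, le_rfl, hs.2⟩
  have hXdiag : ContinuousOn (fun s => X s s) (Icc 0 T) :=
    hXcont.comp (continuous_id.prodMk continuous_id).continuousOn fun s hs => ⟨hs.1, le_rfl, hs.2⟩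
  have hg : ContinuousOn (fun p : ℝ × ℝ => ⟪Y p.1 p.1, f p.1 p.2⟫) (lowerTriangle 0 T) :=
    (hYdiag.comp continuousOn_fst fun p hp => ⟨hp.1.trans hp.2.1, hp.2.2⟩).inner hfcont
  have hintegral := hasDerivWithinAt_integral_lowerTriangle (P := fun s u => ⟪Y s s, X s u⟫)
    (g := fun s u => ⟪Y s s, f s u⟫) hg (hYdiag.inner hXdiag)
    (fun s u hu hus hs =>
      (innerSL ℝ (Y s s)).hasFDerivAt.comp_hasDerivWithinAt u (hXder s u hu hus hs)) ht
  have hboundary :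
      HasDerivWithinAt (fun u => ⟪G (X T T), X T u⟫) ⟪G (X T T), f T t⟫ (Icc 0 T) t :=
    (innerSL ℝ (G (X T T))).hasFDerivAt.comp_hasDerivWithinAt t (hXder T t ht.1 ht.2 le_rfl)
  exact (hintegral.add hboundary).congr (fun u _ => hΦ u) (hΦ t)

/-- Chain rule for the Lyapunov functional
`Φ(t) = ∫ₜᵀ ⟨Y(s,s), X(s,t)⟩ ds + ⟨G(X(T,T)), X(T,t)⟩`:
`Φ'(t) = −⟨Y(t,t), X(t,t)⟩ + ∫ₜᵀ ⟨Y(s,s), f(s,t)⟩ ds + ⟨G(X(T,T)), f(T,t)⟩`. -/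
theorem stmt15 (n : ℕ) (T : ℝ) (hT : 0 < T)
    (X Y f : ℝ → ℝ → EuclideanSpace ℝ (Fin n))
    (G : EuclideanSpace ℝ (Fin n) → EuclideanSpace ℝ (Fin n)) (hG : Continuous G)
    (hXcont : ContinuousOn (fun p : ℝ × ℝ => X p.1 p.2)
      {p : ℝ × ℝ | 0 ≤ p.2 ∧ p.2 ≤ p.1 ∧ p.1 ≤ T})
    (hYcont : ContinuousOn (fun p : ℝ × ℝ => Y p.1 p.2)
      {p : ℝ × ℝ | 0 ≤ p.1 ∧ p.1 ≤ p.2 ∧ p.2 ≤ T})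
    (hfcont : ContinuousOn (fun p : ℝ × ℝ => f p.1 p.2)
      {p : ℝ × ℝ | 0 ≤ p.2 ∧ p.2 ≤ p.1 ∧ p.1 ≤ T})
    (hXC1 : ∀ t ∈ Set.Icc (0:ℝ) T, ContDiffOn ℝ 1 (X t) (Set.Icc 0 t))
    (hYC1 : ∀ t ∈ Set.Icc (0:ℝ) T, ContDiffOn ℝ 1 (Y t) (Set.Icc t T))
    (hXder : ∀ s t : ℝ, 0 ≤ t → t ≤ s → s ≤ T →
      HasDerivWithinAt (fun u => X s u) (f s t) (Set.Icc 0 s) t)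
    (Φ : ℝ → ℝ)
    (hΦ : ∀ t, Φ t = (∫ s in t..T, ⟪Y s s, X s t⟫) + ⟪G (X T T), X T t⟫) :
    ∀ t ∈ Set.Icc (0:ℝ) T,
      HasDerivWithinAt Φ
        (-⟪Y t t, X t t⟫ + (∫ s in t..T, ⟪Y s s, f s t⟫) + ⟪G (X T T), f T t⟫)
        (Set.Icc 0 T) t :=
  stmt15_general n T X Y f G hXcont hYcont hfcont hXder Φ hΦ
end
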